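/- For λ > 0, μ > 0, s ≥ 0, the product (μ/(μ+s)) · (μ/(μ+λ) + λ/(λ+μ+s)) · ((μ²/(λ²+λμ+μ²))·(λ/(λ+s))·((λ+μ)/(λ+μ+s)) + ((λ²+λμ)/(λ²+λμ+μ²))·(μ/(μ+s))) evaluated at s = 0 equals 1, and its negative derivative at s = 0 equals (2λ⁵ + 7λ⁴μ + 8λ³μ² + 7λ²μ³ + 4λμ⁴ + μ⁵)/(λμ(λ+μ)²(λ²+λμ+μ²)). -/

import Mathlib

/-!
Each of the three factors is the Laplace transform of a probability distribution on `[0, ∞)`,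
a mixture of products of the transforms `c / (c + s)` of exponential laws, so it equals `1` at
`s = 0`. By the product rule, the derivative at `0` of a product of functions that are all `1`
there is the sum of their derivatives: the mean AoI is the sum of the means of the three
independent summands, each computed from `d/ds (c / (d + s)) = -c / (d + s)²`.
-/

theorem hasDerivAt_div_const_add {𝕜 : Type*} [NontriviallyNormedField 𝕜] (c d x : 𝕜)
    (h : d + x ≠ 0) : HasDerivAt (fun s => c / (d + s)) (-(c / (d + x) ^ 2)) x :=
  ((hasDerivAt_const x c).div ((hasDerivAt_id' x).const_add d) h).congr_deriv (by ring)

theorem HasDerivAt.mul_of_eq_one {𝕜 : Type*} [NontriviallyNormedField 𝕜] {f g : 𝕜 → 𝕜}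
    {f' g' x : 𝕜} (hf : HasDerivAt f f' x) (hg : HasDerivAt g g' x) (hf1 : f x = 1)
    (hg1 : g x = 1) : HasDerivAt (fun y => f y * g y) (f' + g') x := by
  simpa [hf1, hg1] using hf.fun_mul hg

theorem stmt13 (lam mu : ℝ) (hlam : 0 < lam) (hmu : 0 < mu) :
    (fun s : ℝ => (mu / (mu + s)) * (mu / (mu + lam) + lam / (lam + mu + s)) *
        ((mu^2 / (lam^2 + lam*mu + mu^2)) * (lam / (lam + s)) * ((lam + mu) / (lam + mu + s))
          + ((lam^2 + lam*mu) / (lam^2 + lam*mu + mu^2)) * (mu / (mu + s)))) 0 = 1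
    ∧ - deriv (fun s : ℝ => (mu / (mu + s)) * (mu / (mu + lam) + lam / (lam + mu + s)) *
        ((mu^2 / (lam^2 + lam*mu + mu^2)) * (lam / (lam + s)) * ((lam + mu) / (lam + mu + s))
          + ((lam^2 + lam*mu) / (lam^2 + lam*mu + mu^2)) * (mu / (mu + s)))) 0
      = (2*lam^5 + 7*lam^4*mu + 8*lam^3*mu^2 + 7*lam^2*mu^3 + 4*lam*mu^4 + mu^5)
          / (lam * mu * (lam + mu)^2 * (lam^2 + lam*mu + mu^2)) := by
  have hlm : lam + mu + 0 ≠ 0 := by positivity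
  have hl : lam + 0 ≠ 0 := by positivity
  have hm : mu + 0 ≠ 0 := by positivity
  set p := mu^2 / (lam^2 + lam*mu + mu^2)
  set q := (lam^2 + lam*mu) / (lam^2 + lam*mu + mu^2)
  have hA := hasDerivAt_div_const_add mu mu 0 hm
  have hB := (hasDerivAt_div_const_add lam (lam + mu) 0 hlm).const_add (mu / (mu + lam))
  have hC := (((hasDerivAt_div_const_add lam lam 0 hl).const_mul p).fun_mul
    (hasDerivAt_div_const_add (lam + mu) (lam + mu) 0 hlm)).fun_add
    ((hasDerivAt_div_const_add mu mu 0 hm).const_mul q)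
  have hA1 : mu / (mu + 0) = 1 := by simp [hmu.ne']
  have hB1 : mu / (mu + lam) + lam / (lam + mu + 0) = 1 := by field_simp; ring
  have hC1 : p * (lam / (lam + 0)) * ((lam + mu) / (lam + mu + 0)) + q * (mu / (mu + 0)) = 1 := by
    simp only [p, q, add_zero]; field_simp; ring
  have hF := (hA.mul_of_eq_one hB hA1 hB1).mul_of_eq_one hC (by rw [hA1, hB1, one_mul]) hC1
  refine ⟨by simpa only [hA1, hB1, one_mul] using hC1, ?_⟩
  rw [hF.deriv]
  simp only [p, q, add_zero]
  field_simp
  ring
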